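/- (Uniform winner, congruent loser: strict improvement over the extremal structures.) Let v1 = v2 = 1 and let g be supported on two CTR pairs, g((r1,r2)) = p and g((r'1,r'2)) = 1−p, with p ∈ (0,1), r1, r2, r'1, r'2 ∈ (0,1], r1 > r'1, r2 > r'2, r1 ≥ r2, r'1 ≥ r'2, and r2 < μ1 where μ1 = p·r1 + (1−p)·r'1. Then the no-disclosure revenue and the full-disclosure revenue of g are both equal to μ2 = p·r2 + (1−p)·r'2, and there exists a calibrated information structure x for g with Rev(x) = μ2 + p·(1−p)·(r1−r'1)·(r2−r'2)/μ1 > μ2; in particular, a calibrated information structure strictly revenue-dominates both extremal structures. -/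

import Mathlib

open scoped Classical

noncomputable section

/-- A CTR pair lies in the unit square. -/
def InUnitSq (r : ℝ × ℝ) : Prop := 0 ≤ r.1 ∧ r.1 ≤ 1 ∧ 0 ≤ r.2 ∧ r.2 ≤ 1

/-- A finitely supported probability mass function on CTR pairs in [0,1]². -/
def IsPrior (g : ℝ × ℝ → ℝ) : Prop :=
  (Function.support g).Finite ∧ (∀ r, 0 ≤ g r) ∧
  (∀ r, g r ≠ 0 → InUnitSq r) ∧ (∑ᶠ r, g r) = 1

/-- An information structure for the prior `g`: finitely supported, nonnegative,
signals in [0,1]², with `r`-marginal equal to `g`. -/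
def IsInfoStructure (g : ℝ × ℝ → ℝ) (x : (ℝ × ℝ) × (ℝ × ℝ) → ℝ) : Prop :=
  (Function.support x).Finite ∧ (∀ p, 0 ≤ x p) ∧
  (∀ p, x p ≠ 0 → InUnitSq p.2) ∧ (∀ r, (∑ᶠ s, x (r, s)) = g r)

/-- Calibration: the posterior mean of `rᵢ` given any signal value `c` of bidder `i`
equals `c`. -/
def Calibrated (x : (ℝ × ℝ) × (ℝ × ℝ) → ℝ) : Prop :=
  ∀ c : ℝ, 0 ≤ c → c ≤ 1 →
    (∑ᶠ p : (ℝ × ℝ) × (ℝ × ℝ), if p.2.1 = c then x p * (p.1.1 - c) else 0) = 0 ∧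
    (∑ᶠ p : (ℝ × ℝ) × (ℝ × ℝ), if p.2.2 = c then x p * (p.1.2 - c) else 0) = 0

/-- Independence: for each bidder `i` and each signal pair `s0` with positive
probability, the conditional mean of `rᵢ` given the full signal pair equals the
conditional mean of `rᵢ` given `sᵢ` alone (stated in cross-multiplied form). -/
def Independent (x : (ℝ × ℝ) × (ℝ × ℝ) → ℝ) : Prop :=
  ∀ s0 : ℝ × ℝ, 0 < (∑ᶠ r, x (r, s0)) →
    ((∑ᶠ r, x (r, s0) * r.1) *
        (∑ᶠ p : (ℝ × ℝ) × (ℝ × ℝ), if p.2.1 = s0.1 then x p else 0)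
      = (∑ᶠ p : (ℝ × ℝ) × (ℝ × ℝ), if p.2.1 = s0.1 then x p * p.1.1 else 0) *
        (∑ᶠ r, x (r, s0))) ∧
    ((∑ᶠ r, x (r, s0) * r.2) *
        (∑ᶠ p : (ℝ × ℝ) × (ℝ × ℝ), if p.2.2 = s0.2 then x p else 0)
      = (∑ᶠ p : (ℝ × ℝ) × (ℝ × ℝ), if p.2.2 = s0.2 then x p * p.1.2 else 0) *
        (∑ᶠ r, x (r, s0)))

/-- Expected payment of the click-through auction given CTRs `r` and signals `s`,
with uniform tie-breaking (division by zero is zero in Lean, matching t/0 = 0). -/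
def pay (v1 v2 : ℝ) (r s : ℝ × ℝ) : ℝ :=
  if v2 * s.2 < v1 * s.1 then r.1 * (v2 * s.2 / s.1)
  else if v1 * s.1 < v2 * s.2 then r.2 * (v1 * s.1 / s.2)
  else (r.1 * (v2 * s.2 / s.1) + r.2 * (v1 * s.1 / s.2)) / 2

/-- Expected revenue of an information structure. -/
def Rev (v1 v2 : ℝ) (x : (ℝ × ℝ) × (ℝ × ℝ) → ℝ) : ℝ :=
  ∑ᶠ p : (ℝ × ℝ) × (ℝ × ℝ), x p * pay v1 v2 p.1 p.2

/-- Revenue of the no-disclosure information structure. -/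
def noDisclosureRev (v1 v2 : ℝ) (g : ℝ × ℝ → ℝ) : ℝ :=
  min (v1 * ∑ᶠ r : ℝ × ℝ, g r * r.1) (v2 * ∑ᶠ r : ℝ × ℝ, g r * r.2)

/-- Revenue of the full-disclosure information structure. -/
def fullDisclosureRev (v1 v2 : ℝ) (g : ℝ × ℝ → ℝ) : ℝ :=
  ∑ᶠ r : ℝ × ℝ, g r * min (v1 * r.1) (v2 * r.2)

/-!
Reveal to bidder 2 its own CTR and to bidder 1 nothing, so that bidder 1's signal is its prior
mean `μ1`. This structure is calibrated, and since `r2, r2' < μ1` bidder 1 always wins and pays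
`r1 * r2 / μ1`, resp. `r1' * r2' / μ1`. The expected payment `E[r1 r2] / E[r1]` exceeds
`μ2 = E[r2]` by `Cov(r1, r2) / μ1 = p (1 - p) (r1 - r1') (r2 - r2') / μ1 > 0`, while both extremal
structures earn `μ2` because bidder 2 is always the weaker bidder.
-/

open Function Set

theorem finsum_eq_finsum_comp_of_support_subset_range {α β M : Type*} [AddCommMonoid M]
    {f : α → M} {e : β → α} (he : Injective e) (hf : support f ⊆ range e) :
    ∑ᶠ a, f a = ∑ᶠ b, f (e b) := by
  rw [← finsum_mem_range he, ← finsum_mem_univ]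
  exact finsum_mem_inter_support_eq' f _ _ fun a ha => by simp [hf ha]

section TwoPoint

variable {α : Type*} [DecidableEq α] {g : α → ℝ} {a b : α} {u w : ℝ}

theorem eq_or_eq_of_ne_zero_of_eq_ite
    (hg : ∀ r, g r = if r = a then u else if r = b then w else 0) {r : α} (hr : g r ≠ 0) :
    r = a ∨ r = b := by
  by_contra! h
  exact hr (by rw [hg, if_neg h.1, if_neg h.2])

theorem finsum_mul_eq_of_eq_ite
    (hg : ∀ r, g r = if r = a then u else if r = b then w else 0) (hab : a ≠ b) (F : α → ℝ) :
    ∑ᶠ r, g r * F r = u * F a + w * F b := by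
  have hsupp : support (fun r => g r * F r) ⊆ (({a, b} : Finset α) : Set α) := fun r hr => by
    rcases eq_or_eq_of_ne_zero_of_eq_ite hg (left_ne_zero_of_mul hr) with rfl | rfl <;> simp
  rw [finsum_eq_sum_of_support_subset _ hsupp, Finset.sum_pair hab]
  simp [hg, hab.symm]

end TwoPoint

theorem isPrior_of_eq_ite {g : ℝ × ℝ → ℝ} {a b : ℝ × ℝ} {u w : ℝ}
    (hg : ∀ r, g r = if r = a then u else if r = b then w else 0) (hab : a ≠ b)
    (hu : 0 ≤ u) (hw : 0 ≤ w) (huw : u + w = 1) (ha : InUnitSq a) (hb : InUnitSq b) :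
    IsPrior g := by
  refine ⟨((finite_singleton b).insert a).subset fun r hr => ?_, fun r => ?_, fun r hr => ?_, ?_⟩
  · exact eq_or_eq_of_ne_zero_of_eq_ite hg hr
  · rw [hg r]
    split_ifs <;> first | assumption | exact le_rfl
  · rcases eq_or_eq_of_ne_zero_of_eq_ite hg hr with rfl | rfl <;> assumption
  · simpa [huw] using finsum_mul_eq_of_eq_ite hg hab fun _ => 1

theorem IsPrior.finsum_mul_fst_mem_Icc {g : ℝ × ℝ → ℝ} (hg : IsPrior g) :
    ∑ᶠ r, g r * r.1 ∈ Icc (0 : ℝ) 1 := by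
  obtain ⟨hfin, hnonneg, hsq, hone⟩ := hg
  have hterm : ∀ r, 0 ≤ g r * r.1 ∧ g r * r.1 ≤ g r := fun r => by
    by_cases hr : g r = 0
    · simp [hr]
    · exact ⟨mul_nonneg (hnonneg r) (hsq r hr).1, mul_le_of_le_one_right (hnonneg r) (hsq r hr).2.1⟩
  refine ⟨finsum_nonneg fun r => (hterm r).1, hone ▸ ?_⟩
  exact finsum_le_finsum' (hfin.subset (support_mul_subset_left _ _)) hfin fun r => (hterm r).2

def deterministicSignal (g : ℝ × ℝ → ℝ) (σ : ℝ × ℝ → ℝ × ℝ) : (ℝ × ℝ) × (ℝ × ℝ) → ℝ :=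
  fun q => if q.2 = σ q.1 then g q.1 else 0

section DeterministicSignal

variable {g : ℝ × ℝ → ℝ} {σ : ℝ × ℝ → ℝ × ℝ}

theorem support_deterministicSignal_subset :
    support (deterministicSignal g σ) ⊆ (fun r => (r, σ r)) '' support g := by
  intro q hq
  by_cases h : q.2 = σ q.1
  · exact ⟨q.1, by simpa [deterministicSignal, h] using hq, Prod.ext rfl h.symm⟩
  · exact absurd (if_neg h) hq

theorem finsum_deterministicSignal_mul (F : (ℝ × ℝ) × (ℝ × ℝ) → ℝ) :
    ∑ᶠ q, deterministicSignal g σ q * F q = ∑ᶠ r, g r * F (r, σ r) := by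
  rw [finsum_eq_finsum_comp_of_support_subset_range (e := fun r => (r, σ r))
    (fun r r' h => congrArg Prod.fst h)]
  · simp [deterministicSignal]
  · exact (support_mul_subset_left _ _).trans
      (support_deterministicSignal_subset.trans (image_subset_range _ _))

theorem finsum_ite_deterministicSignal_mul (P : (ℝ × ℝ) × (ℝ × ℝ) → Prop) [DecidablePred P]
    (F : (ℝ × ℝ) × (ℝ × ℝ) → ℝ) :
    ∑ᶠ q, (if P q then deterministicSignal g σ q * F q else 0) =
      ∑ᶠ r, g r * if P (r, σ r) then F (r, σ r) else 0 := by
  simp only [← mul_ite_zero]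
  exact finsum_deterministicSignal_mul _

theorem isInfoStructure_deterministicSignal (hfin : (support g).Finite)
    (hnonneg : ∀ r, 0 ≤ g r) (hσ : ∀ r, g r ≠ 0 → InUnitSq (σ r)) :
    IsInfoStructure g (deterministicSignal g σ) := by
  refine ⟨(hfin.image _).subset support_deterministicSignal_subset, fun q => ?_, fun q hq => ?_,
    fun r => ?_⟩
  · unfold deterministicSignal
    split_ifs
    exacts [hnonneg _, le_rfl]
  · obtain ⟨r, hr, rfl⟩ := support_deterministicSignal_subset hq
    exact hσ r hr
  · exact (finsum_eq_single _ (σ r) fun s hs => if_neg hs).trans (if_pos rfl)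

theorem rev_deterministicSignal (v1 v2 : ℝ) :
    Rev v1 v2 (deterministicSignal g σ) = ∑ᶠ r, g r * pay v1 v2 r (σ r) :=
  finsum_deterministicSignal_mul _

end DeterministicSignal

def revealSecondOnly (g : ℝ × ℝ → ℝ) (r : ℝ × ℝ) : ℝ × ℝ := (∑ᶠ r', g r' * r'.1, r.2)

section RevealSecondOnly

variable {g : ℝ × ℝ → ℝ}

theorem isInfoStructure_revealSecondOnly (hg : IsPrior g) :
    IsInfoStructure g (deterministicSignal g (revealSecondOnly g)) :=
  isInfoStructure_deterministicSignal hg.1 hg.2.1 fun r hr =>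
    ⟨hg.finsum_mul_fst_mem_Icc.1, hg.finsum_mul_fst_mem_Icc.2, (hg.2.2.1 r hr).2.2⟩

theorem calibrated_revealSecondOnly (hg : IsPrior g) :
    Calibrated (deterministicSignal g (revealSecondOnly g)) := by
  intro c _ _
  rw [finsum_ite_deterministicSignal_mul, finsum_ite_deterministicSignal_mul]
  simp only [revealSecondOnly]
  refine ⟨?_, finsum_eq_zero_of_forall_eq_zero fun r => by split_ifs with h <;> simp [h]⟩
  by_cases hc : ∑ᶠ r, g r * r.1 = c
  · simp only [hc, if_true, mul_sub]
    rw [finsum_sub_distrib (hg.1.subset (support_mul_subset_left _ _))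
      (hg.1.subset (support_mul_subset_left _ _)), ← finsum_mul, hg.2.2.2, hc, one_mul, sub_self]
  · simp [hc]

end RevealSecondOnly

theorem pay_of_lt {v1 v2 : ℝ} (r : ℝ × ℝ) {s : ℝ × ℝ} (h : v2 * s.2 < v1 * s.1) :
    pay v1 v2 r s = r.1 * (v2 * s.2 / s.1) :=
  if_pos h

theorem uniform_winner_congruent_loser_strict_improvement_general
    (p r1 r2 r1' r2' : ℝ) (hp0 : 0 < p) (hp1 : p < 1)
    (hr1'' : r1 ≤ 1) (hr2 : 0 < r2) (hr2'' : r2 ≤ 1)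
    (hr1'0 : 0 < r1') (hr1'1 : r1' ≤ 1) (hr2'0 : 0 < r2') (hr2'1 : r2' ≤ 1)
    (h11' : r1' < r1) (h22' : r2' < r2) (h12 : r2 ≤ r1) (h1'2' : r2' ≤ r1')
    (hweak : r2 < p * r1 + (1 - p) * r1')
    (g : ℝ × ℝ → ℝ)
    (hgdef : ∀ r, g r = if r = (r1, r2) then p else if r = (r1', r2') then 1 - p else 0) :
    noDisclosureRev 1 1 g = p * r2 + (1 - p) * r2' ∧
    fullDisclosureRev 1 1 g = p * r2 + (1 - p) * r2' ∧
    ∃ x : (ℝ × ℝ) × (ℝ × ℝ) → ℝ,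
      IsInfoStructure g x ∧ Calibrated x ∧
      Rev 1 1 x = p * r2 + (1 - p) * r2' +
        p * (1 - p) * (r1 - r1') * (r2 - r2') / (p * r1 + (1 - p) * r1') ∧
      p * r2 + (1 - p) * r2' < Rev 1 1 x := by
  have hab : ((r1, r2) : ℝ × ℝ) ≠ (r1', r2') := fun h => h11'.ne' (congrArg Prod.fst h)
  have hsum := finsum_mul_eq_of_eq_ite hgdef hab
  have hprior : IsPrior g := isPrior_of_eq_ite hgdef hab hp0.le (sub_nonneg.2 hp1.le)
    (add_sub_cancel p 1) ⟨(hr1'0.trans h11').le, hr1'', hr2.le, hr2''⟩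
    ⟨hr1'0.le, hr1'1, hr2'0.le, hr2'1⟩
  have hmean : ∑ᶠ r : ℝ × ℝ, g r * r.1 = p * r1 + (1 - p) * r1' := hsum _
  have hμ : 0 < p * r1 + (1 - p) * r1' := hr2.trans hweak
  have hrev : Rev 1 1 (deterministicSignal g (revealSecondOnly g)) = p * r2 + (1 - p) * r2' +
      p * (1 - p) * (r1 - r1') * (r2 - r2') / (p * r1 + (1 - p) * r1') := by
    rw [rev_deterministicSignal, hsum]
    simp only [revealSecondOnly, hmean]
    rw [pay_of_lt _ (by simpa using hweak), pay_of_lt _ (by simpa using h22'.trans hweak)]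
    field_simp
    ring
  have hgain : 0 < p * (1 - p) * (r1 - r1') * (r2 - r2') / (p * r1 + (1 - p) * r1') :=
    div_pos (mul_pos (mul_pos (mul_pos hp0 (sub_pos.2 hp1)) (sub_pos.2 h11')) (sub_pos.2 h22')) hμ
  refine ⟨?_, ?_, _, isInfoStructure_revealSecondOnly hprior, calibrated_revealSecondOnly hprior,
    hrev, hrev ▸ lt_add_of_pos_right _ hgain⟩
  · rw [noDisclosureRev, hsum, hsum, one_mul, one_mul]
    exact min_eq_right (add_le_add (mul_le_mul_of_nonneg_left h12 hp0.le)
      (mul_le_mul_of_nonneg_left h1'2' (sub_nonneg.2 hp1.le)))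
  · rw [fullDisclosureRev, hsum]
    simp only [one_mul, min_eq_right h12, min_eq_right h1'2']

/-- uniform winner, congruent loser: both extremal structures
yield μ2, and some calibrated information structure yields exactly
μ2 + p(1−p)(r1−r1')(r2−r2')/μ1 > μ2. -/
theorem uniform_winner_congruent_loser_strict_improvement
    (p r1 r2 r1' r2' : ℝ) (hp0 : 0 < p) (hp1 : p < 1)
    (hr1 : 0 < r1) (hr1'' : r1 ≤ 1) (hr2 : 0 < r2) (hr2'' : r2 ≤ 1)
    (hr1'0 : 0 < r1') (hr1'1 : r1' ≤ 1) (hr2'0 : 0 < r2') (hr2'1 : r2' ≤ 1)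
    (h11' : r1' < r1) (h22' : r2' < r2) (h12 : r2 ≤ r1) (h1'2' : r2' ≤ r1')
    (hweak : r2 < p * r1 + (1 - p) * r1')
    (g : ℝ × ℝ → ℝ)
    (hgdef : ∀ r, g r = if r = (r1, r2) then p else if r = (r1', r2') then 1 - p else 0) :
    noDisclosureRev 1 1 g = p * r2 + (1 - p) * r2' ∧
    fullDisclosureRev 1 1 g = p * r2 + (1 - p) * r2' ∧
    ∃ x : (ℝ × ℝ) × (ℝ × ℝ) → ℝ,
      IsInfoStructure g x ∧ Calibrated x ∧
      Rev 1 1 x = p * r2 + (1 - p) * r2' +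
        p * (1 - p) * (r1 - r1') * (r2 - r2') / (p * r1 + (1 - p) * r1') ∧
      p * r2 + (1 - p) * r2' < Rev 1 1 x :=
  uniform_winner_congruent_loser_strict_improvement_general p r1 r2 r1' r2' hp0 hp1 hr1'' hr2 hr2''
    hr1'0 hr1'1 hr2'0 hr2'1 h11' h22' h12 h1'2' hweak g hgdef
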